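/- (Contrapositive sampling lemma) With the setup above, if Σ_{i∈I} d(x_i, W)^p > Σ_{i∈I} d(x_i, V*)^p + ε Σ_{i=1}^n ‖x_i‖^p, then the bad set B = {i ∈ I : d(x_i, W)^p > (1+ε/2) d(x_i, V*)^p} satisfies Σ_{i∈B} ‖x_i‖^p ≥ (ε/2) Σ_{i=1}^n ‖x_i‖^p. Consequently, a random index sampled with probability proportional to ‖x_i‖^p lies in B with probability at least ε/2. -/
import Mathlib


open Metric Finset

theorem stmt2 (d n : ℕ) (x : Fin n → EuclideanSpace ℝ (Fin d))
    (I : Finset (Fin n)) (Vstar W : Submodule ℝ (EuclideanSpace ℝ (Fin d)))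
    (p : ℝ) (hp : 1 ≤ p) (ε : ℝ) (hε : ε ∈ Set.Ioo (0:ℝ) 1)
    (B : Finset (Fin n))
    (hB : B = I.filter (fun i =>
      infDist (x i) (W : Set (EuclideanSpace ℝ (Fin d))) ^ p >
        (1 + ε / 2) * infDist (x i) (Vstar : Set (EuclideanSpace ℝ (Fin d))) ^ p))
    (hbig : ∑ i ∈ I, infDist (x i) (W : Set (EuclideanSpace ℝ (Fin d))) ^ p >
      ∑ i ∈ I, infDist (x i) (Vstar : Set (EuclideanSpace ℝ (Fin d))) ^ p +
        ε * ∑ i : Fin n, ‖x i‖ ^ p) :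
    (ε / 2) * ∑ i : Fin n, ‖x i‖ ^ p ≤ ∑ i ∈ B, ‖x i‖ ^ p ∧
      ((0:ℝ) < ∑ i : Fin n, ‖x i‖ ^ p →
        ε / 2 ≤ (∑ i ∈ B, ‖x i‖ ^ p) / ∑ i : Fin n, ‖x i‖ ^ p) := by
  obtain ⟨hε0, hε1⟩ := hε
  have hp0 : (0:ℝ) ≤ p := by linarith
  set DW : Fin n → ℝ := fun i => infDist (x i) (W : Set (EuclideanSpace ℝ (Fin d))) ^ p
  set DV : Fin n → ℝ := fun i => infDist (x i) (Vstar : Set (EuclideanSpace ℝ (Fin d))) ^ p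
  set N : Fin n → ℝ := fun i => ‖x i‖ ^ p with hN
  have hle : ∀ (V : Submodule ℝ (EuclideanSpace ℝ (Fin d))) i,
      infDist (x i) (V : Set (EuclideanSpace ℝ (Fin d))) ^ p ≤ N i := by
    intro V i
    apply Real.rpow_le_rpow infDist_nonneg _ hp0
    calc infDist (x i) (V : Set (EuclideanSpace ℝ (Fin d))) ≤ dist (x i) 0 :=
          infDist_le_dist_of_mem (Submodule.zero_mem V)
      _ = ‖x i‖ := dist_zero_right _
  have hDVn : ∀ i, 0 ≤ DV i := fun i => Real.rpow_nonneg infDist_nonneg p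
  have hNn : ∀ i, 0 ≤ N i := fun i => Real.rpow_nonneg (norm_nonneg _) p
  have hsplit : ∑ i ∈ B, DW i + ∑ i ∈ I.filter (fun i => ¬ (DW i > (1 + ε / 2) * DV i)), DW i
      = ∑ i ∈ I, DW i := by
    rw [hB]; exact Finset.sum_filter_add_sum_filter_not I _ DW
  have h1 : ∑ i ∈ B, DW i ≤ ∑ i ∈ B, N i :=
    Finset.sum_le_sum (fun i _ => hle W i)
  have h2 : ∑ i ∈ I.filter (fun i => ¬ (DW i > (1 + ε / 2) * DV i)), DW i
      ≤ (1 + ε / 2) * ∑ i ∈ I, DV i := by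
    rw [Finset.mul_sum]
    calc ∑ i ∈ I.filter (fun i => ¬ (DW i > (1 + ε / 2) * DV i)), DW i
        ≤ ∑ i ∈ I.filter (fun i => ¬ (DW i > (1 + ε / 2) * DV i)), (1 + ε / 2) * DV i := by
          apply Finset.sum_le_sum
          intro i hi
          exact not_lt.mp (Finset.mem_filter.mp hi).2
      _ ≤ ∑ i ∈ I, (1 + ε / 2) * DV i := by
          apply Finset.sum_le_sum_of_subset_of_nonneg (Finset.filter_subset _ _)
          intro i _ _
          exact mul_nonneg (by linarith) (hDVn i)
  have h3 : ∑ i ∈ I, DV i ≤ ∑ i : Fin n, N i := by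
    calc ∑ i ∈ I, DV i ≤ ∑ i ∈ I, N i := Finset.sum_le_sum (fun i _ => hle Vstar i)
      _ ≤ ∑ i : Fin n, N i :=
        Finset.sum_le_sum_of_subset_of_nonneg (Finset.subset_univ I) (fun i _ _ => hNn i)
  have hmain : (ε / 2) * ∑ i : Fin n, N i ≤ ∑ i ∈ B, N i := by nlinarith [hbig, h1, h2, h3, hsplit]
  refine ⟨hmain, fun hS => ?_⟩
  rw [le_div_iff₀ hS]
  exact hmain
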